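/- Let $k$ be a field of characteristic zero, let $t \geq 1$ and $u \geq 0$ be integers, and let $c_1, c_2 \in k \setminus \{0\}$. Then the $k$-derivation $d = \partial_x + x^u(c_1 x^t + c_2 y)\partial_y$ of $k[x,y]$ is simple if and only if $(u+1) \nmid t$. -/

import Mathlib

/-!
View `k[x,y]` as `k[x][y]`. Then `d` acts on `k[x]` as `p ↦ p'` and sends `y` to `a y + b` with
`a = c₂ xᵘ`, `b = c₁ x^(t+u)`, and such a derivation is simple exactly when `p' = a p + b` has no
polynomial solution. A solution `p` makes `(y - p)` a proper `d`-stable ideal, as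
`d (y - p) = a (y - p)`. Conversely, let `n` be the least `y`-degree of a nonzero element of a
nonzero `d`-stable ideal `I`. The coefficients of `yⁿ` in elements of `I` of degree `≤ n` form an
ideal of `k[x]` stable under `c ↦ c' + n a c`; its generator `g` then divides `g'`, so it is a unit
and `I` contains some `f = yⁿ + f₁ yⁿ⁻¹ + ⋯`. If `n = 0` then `1 ∈ I`; otherwise minimality gives
`d f = n a f`, and comparing coefficients of `yⁿ⁻¹` shows that `-f₁ / n` solves the equation.

For `p' = c₂ xᵘ p + c₁ x^(t+u)` the coefficient recursion
`(j+1) p_(j+1) = c₂ p_(j-u) + [j = t+u] c₁` links only exponents in one residue class mod `u + 1`.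
If `(u+1) ∤ t`, running it up the class of `t` from its least element forces `p_t = 0`, which
contradicts the recursion at the top degree.
If `t = (u+1) s`, a solution of degree `t` is built one monomial at a time from the top.
-/

namespace Derivation

variable {R A B : Type*} [CommRing R] [CommRing A] [CommRing B] [Algebra R A] [Algebra R B]

def IsSimple (d : Derivation R A A) : Prop :=
  ∀ I : Ideal A, (∀ f ∈ I, d f ∈ I) → I = ⊥ ∨ I = ⊤

def conj (e : A ≃ₐ[R] B) (d : Derivation R A A) : Derivation R B B :=
  Derivation.mk' (e.toLinearMap ∘ₗ d.toLinearMap ∘ₗ e.symm.toLinearMap) fun a b => by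
    simp [Derivation.leibniz]

@[simp]
lemma conj_apply (e : A ≃ₐ[R] B) (d : Derivation R A A) (b : B) :
    d.conj e b = e (d (e.symm b)) := rfl

lemma conj_symm_conj (e : A ≃ₐ[R] B) (d : Derivation R A A) :
    (d.conj e).conj e.symm = d := by
  ext
  simp

lemma IsSimple.of_conj {e : A ≃ₐ[R] B} {d : Derivation R A A} (h : (d.conj e).IsSimple) :
    d.IsSimple := by
  intro I hI
  have hstable : ∀ g ∈ I.comap e.symm, d.conj e g ∈ I.comap e.symm := fun g hg => by
    simpa [Ideal.mem_comap] using hI _ hg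
  have hI_eq : I = (I.comap e.symm).comap e := by
    ext f
    simp [Ideal.mem_comap]
  rcases h _ hstable with hbot | htop
  · left
    rw [hI_eq, hbot]
    exact Ideal.comap_bot_of_injective _ e.injective
  · right
    rw [hI_eq, htop, Ideal.comap_top]

lemma isSimple_conj_iff (e : A ≃ₐ[R] B) (d : Derivation R A A) :
    (d.conj e).IsSimple ↔ d.IsSimple :=
  ⟨IsSimple.of_conj, fun h => .of_conj (e := e.symm) (by rwa [conj_symm_conj])⟩

end Derivation

section

open Polynomial Polynomial.Bivariate

namespace Ideal

variable {R : Type*} [CommRing R]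

lemma mem_leadingCoeffNth_iff_coeff (I : Ideal R[X]) (n : ℕ) (x : R) :
    x ∈ I.leadingCoeffNth n ↔ ∃ p ∈ I, p.degree ≤ n ∧ p.coeff n = x := by
  simp only [leadingCoeffNth, degreeLE, Submodule.mem_map, Submodule.mem_inf, mem_degreeLE,
    mem_ofPolynomial, lcoeff_apply]
  constructor
  · rintro ⟨p, ⟨hdeg, hp⟩, rfl⟩
    exact ⟨p, hp, hdeg, rfl⟩
  · rintro ⟨p, hp, hdeg, rfl⟩
    exact ⟨p, ⟨hdeg, hp⟩, rfl⟩

lemma eq_zero_of_mem_of_leadingCoeffNth_eq_bot {I : Ideal R[X]} {n : ℕ}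
    (h : I.leadingCoeffNth n = ⊥) {p : R[X]} (hp : p ∈ I) (hdeg : p.degree ≤ n) : p = 0 := by
  have := (I.mem_leadingCoeffNth n p.leadingCoeff).2 ⟨p, hp, hdeg, rfl⟩
  rwa [h, Submodule.mem_bot, leadingCoeff_eq_zero] at this

lemma eq_top_of_derivative_add_mul_mem {k : Type*} [Field k] [CharZero k] {J : Ideal k[X]}
    (hJ : J ≠ ⊥) (r : k[X]) (h : ∀ c ∈ J, derivative c + r * c ∈ J) : J = ⊤ := by
  set g := Submodule.IsPrincipal.generator J
  have hgJ : g ∈ J := Submodule.IsPrincipal.generator_mem J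
  have hg : g ≠ 0 := by rwa [Ne, ← Submodule.IsPrincipal.eq_bot_iff_generator_eq_zero]
  have hdvd : g ∣ derivative g := (dvd_add_left (dvd_mul_left g r)).1
    ((Submodule.IsPrincipal.mem_iff_generator_dvd J).1 (h g hgJ))
  refine J.eq_top_of_isUnit_mem hgJ ?_
  rw [isUnit_iff_degree_eq_zero, degree_eq_natDegree hg,
    derivative_eq_zero.1 (dvd_derivative_iff.1 hdvd), Nat.cast_zero]

end Ideal

/-- `D = ∂ₓ + (a y + b) ∂_y` on `k[x][y]`. -/
structure Derivation.IsShamsuddin {k : Type*} [CommRing k] (D : Derivation k k[X][Y] k[X][Y])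
    (a b : k[X]) : Prop where
  apply_C : ∀ p, D (C p) = C (derivative p)
  apply_Y : D Y = C a * Y + C b

namespace Derivation.IsShamsuddin

section CommRing

variable {k : Type*} [CommRing k] {D : Derivation k k[X][Y] k[X][Y]} {a b : k[X]}

lemma coeff_apply (hD : D.IsShamsuddin a b) (f : k[X][Y]) (j : ℕ) :
    (D f).coeff j =
      derivative (f.coeff j) + j * a * f.coeff j + (j + 1) * b * f.coeff (j + 1) := by
  induction f using Polynomial.induction_on' with
  | add f g hf hg =>
    simp only [map_add, coeff_add, hf, hg]
    ring
  | monomial n q =>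
    rw [← C_mul_X_pow_eq_monomial, D.leibniz, D.leibniz_pow, hD.apply_Y, hD.apply_C]
    rcases n with _ | n
    · rcases j with _ | j <;> simp [coeff_C]
    have hexpand : C q * (((n + 1 : ℕ) : k[X][Y]) * (X ^ n * (C a * X + C b))) +
        X ^ (n + 1) * C (derivative q) =
        C (derivative q + (n + 1) * q * a) * X ^ (n + 1) + C ((n + 1) * q * b) * X ^ n := by
      simp only [map_add, map_mul, _root_.map_natCast, map_one]
      push_cast
      ring
    simp only [smul_eq_mul, nsmul_eq_mul]
    rw [Nat.add_sub_cancel, hexpand, coeff_add, coeff_C_mul_X_pow, coeff_C_mul_X_pow,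
      coeff_C_mul_X_pow, coeff_C_mul_X_pow]
    obtain rfl | rfl | ⟨h₁, h₂⟩ : j = n + 1 ∨ j = n ∨ (j ≠ n + 1 ∧ j ≠ n) := by omega
    · simp [mul_comm, mul_left_comm]
    · simp [mul_comm, mul_left_comm]
    · simp [h₁, h₂]

lemma degree_apply_le (hD : D.IsShamsuddin a b) {f : k[X][Y]} {n : ℕ} (hf : f.degree ≤ n) :
    (D f).degree ≤ n := by
  rw [degree_le_iff_coeff_zero] at hf ⊢
  intro m hm
  rw [hD.coeff_apply, hf m hm, hf (m + 1) (hm.trans (by exact_mod_cast m.lt_succ_self))]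
  simp

lemma derivative_add_mem_leadingCoeffNth (hD : D.IsShamsuddin a b) {I : Ideal k[X][Y]}
    (hI : ∀ f ∈ I, D f ∈ I) {n : ℕ} {c : k[X]} (hc : c ∈ I.leadingCoeffNth n) :
    derivative c + n * a * c ∈ I.leadingCoeffNth n := by
  obtain ⟨f, hfI, hdeg, rfl⟩ := (I.mem_leadingCoeffNth_iff_coeff n c).1 hc
  refine (I.mem_leadingCoeffNth_iff_coeff n _).2 ⟨D f, hI f hfI, hD.degree_apply_le hdeg, ?_⟩
  rw [hD.coeff_apply, coeff_eq_zero_of_degree_lt (n := n + 1)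
    (hdeg.trans_lt (by exact_mod_cast n.lt_succ_self)), mul_zero, add_zero]

lemma not_isSimple_of_derivative_eq [Nontrivial k] (hD : D.IsShamsuddin a b) {p : k[X]}
    (hp : derivative p = a * p + b) : ¬D.IsSimple := by
  intro hsimple
  have hF : D (X - C p) = C a * (X - C p) := by
    rw [map_sub, hD.apply_Y, hD.apply_C, hp, map_add, map_mul]
    ring
  have hstable : ∀ f ∈ Ideal.span {X - C p}, D f ∈ Ideal.span {X - C p} := by
    intro f hf
    obtain ⟨g, rfl⟩ := Ideal.mem_span_singleton'.1 hf
    rw [Ideal.mem_span_singleton, D.leibniz, hF, smul_eq_mul, smul_eq_mul]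
    exact ⟨g * C a + D g, by ring⟩
  rcases hsimple _ hstable with h | h
  · exact X_sub_C_ne_zero p (Ideal.span_singleton_eq_bot.1 h)
  · exact not_isUnit_X_sub_C p (Ideal.span_singleton_eq_top.1 h)

end CommRing

section Field

variable {k : Type*} [Field k] [CharZero k] {D : Derivation k k[X][Y] k[X][Y]} {a b : k[X]}

lemma exists_derivative_eq_of_coeff_eq_one_mem (hD : D.IsShamsuddin a b) {I : Ideal k[X][Y]}
    (hI : ∀ f ∈ I, D f ∈ I) {n : ℕ} (hmin : I.leadingCoeffNth n = ⊥) {f : k[X][Y]}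
    (hfI : f ∈ I) (hdeg : f.degree ≤ ↑(n + 1)) (hf : f.coeff (n + 1) = 1) :
    ∃ p : k[X], derivative p = a * p + b := by
  set g := D f - C ((n + 1 : ℕ) * a) * f
  have hg : g = 0 := by
    refine Ideal.eq_zero_of_mem_of_leadingCoeffNth_eq_bot hmin
      (I.sub_mem (hI f hfI) (I.mul_mem_left _ hfI))
      ((degree_le_iff_coeff_zero _ _).2 fun m hm => ?_)
    have hm : n + 1 ≤ m := by exact_mod_cast hm
    rw [degree_le_iff_coeff_zero] at hdeg
    rw [coeff_sub, hD.coeff_apply, coeff_C_mul,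
      hdeg (m + 1) (by exact_mod_cast Nat.lt_succ_of_le hm)]
    rcases hm.eq_or_lt with rfl | hlt
    · rw [hf]
      push_cast
      simp
    · rw [hdeg m (by exact_mod_cast hlt)]
      simp
  have hcoeff : derivative (f.coeff n) - a * f.coeff n + (n + 1) * b = 0 := by
    have := congrArg (coeff · n) hg
    simp only [g, coeff_sub, hD.coeff_apply, coeff_C_mul, hf, coeff_zero] at this
    push_cast at this
    linear_combination this
  have hunit : C (-((n : k) + 1)⁻¹) * ((n : k[X]) + 1) = -1 := by
    rw [← _root_.map_natCast C, ← C_1, ← C_add, ← C_mul, neg_mul,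
      inv_mul_cancel₀ (Nat.cast_add_one_ne_zero n), C_neg, C_1]
  refine ⟨C (-((n : k) + 1)⁻¹) * f.coeff n, ?_⟩
  rw [derivative_C_mul]
  linear_combination C (-((n : k) + 1)⁻¹) * hcoeff - b * hunit

theorem isSimple_of_not_exists_derivative_eq (hD : D.IsShamsuddin a b)
    (h : ¬∃ p : k[X], derivative p = a * p + b) : D.IsSimple := by
  classical
  intro I hI
  refine or_iff_not_imp_left.2 fun hI0 => ?_
  have hex : ∃ n, I.leadingCoeffNth n ≠ ⊥ := by
    obtain ⟨f, hfI, hf0⟩ := Submodule.exists_mem_ne_zero_of_ne_bot hI0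
    exact ⟨f.natDegree, fun hbot =>
      hf0 (Ideal.eq_zero_of_mem_of_leadingCoeffNth_eq_bot hbot hfI degree_le_natDegree)⟩
  have htop : I.leadingCoeffNth (Nat.find hex) = ⊤ :=
    Ideal.eq_top_of_derivative_add_mul_mem (Nat.find_spec hex) _
      fun c hc => hD.derivative_add_mem_leadingCoeffNth hI hc
  have hmin : ∀ m < Nat.find hex, I.leadingCoeffNth m = ⊥ := fun m hm =>
    not_not.1 (Nat.find_min hex hm)
  obtain ⟨f, hfI, hdeg, hf⟩ :=
    (I.mem_leadingCoeffNth_iff_coeff _ 1).1 (htop ▸ Submodule.mem_top)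
  rcases hn : Nat.find hex with _ | n
  · rw [hn] at hf hdeg
    rw [eq_C_of_degree_le_zero hdeg, hf, C_1] at hfI
    exact (Ideal.eq_top_iff_one I).2 hfI
  · rw [hn] at hf hdeg hmin
    exact absurd (hD.exists_derivative_eq_of_coeff_eq_one_mem hI (hmin n n.lt_succ_self) hfI
      hdeg hf) h

theorem isSimple_iff_not_exists_derivative_eq (hD : D.IsShamsuddin a b) :
    D.IsSimple ↔ ¬∃ p : k[X], derivative p = a * p + b :=
  ⟨fun hsimple ⟨_, hp⟩ => hD.not_isSimple_of_derivative_eq hp hsimple,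
    hD.isSimple_of_not_exists_derivative_eq⟩

end Field

end Derivation.IsShamsuddin

namespace Polynomial

variable {k : Type*} [Field k]

lemma exists_derivative_eq_C_mul_X_pow_mul_add {c₂ : k} (hc₂ : c₂ ≠ 0) (u s : ℕ) (c : k) :
    ∃ p : k[X], derivative p = C c₂ * X ^ u * p + C c * X ^ ((u + 1) * s + u) := by
  have hγ : ∀ c : k, C c₂ * C (-c / c₂) + C c = 0 := fun c => by
    rw [← C_mul, ← C_add, mul_div_cancel₀ _ hc₂, neg_add_cancel, C_0]
  induction s generalizing c with
  | zero =>
    refine ⟨C (-c / c₂), ?_⟩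
    rw [derivative_C, mul_zero, zero_add]
    linear_combination -(X ^ u) * hγ c
  | succ s ih =>
    set N := (u + 1) * s + u + 1
    set γ := -c / c₂
    obtain ⟨q, hq⟩ := ih (-γ * N)
    refine ⟨C γ * X ^ N + q, ?_⟩
    have hN : (u + 1) * (s + 1) + u = N + u := by ring
    rw [derivative_add, derivative_C_mul_X_pow, hq, hN, pow_add, Nat.add_sub_cancel]
    simp only [map_mul, map_neg, map_natCast]
    linear_combination -(X ^ N * X ^ u) * hγ c

variable {t u : ℕ} {c₂ c : k} {p : k[X]}

lemma coeff_succ_mul_of_derivative_eq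
    (hp : derivative p = C c₂ * X ^ u * p + C c * X ^ (t + u)) (j : ℕ) :
    p.coeff (j + 1) * (j + 1) =
      (if u ≤ j then c₂ * p.coeff (j - u) else 0) + (if j = t + u then c else 0) := by
  simpa [coeff_derivative, mul_assoc, coeff_X_pow_mul', coeff_C_mul_X_pow, mul_ite] using
    congrArg (coeff · j) hp

variable [CharZero k]

lemma coeff_eq_zero_of_derivative_eq (hp : derivative p = C c₂ * X ^ u * p + C c * X ^ (t + u))
    (ht : ¬(u + 1) ∣ t) : p.coeff t = 0 := by
  set r := t % (u + 1) with hr_def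
  have hr : 0 < r := Nat.pos_of_ne_zero fun h => ht (Nat.dvd_of_mod_eq_zero h)
  have hru : r < u + 1 := Nat.mod_lt _ u.succ_pos
  have hclass : ∀ m, r + (u + 1) * m ≤ t → p.coeff (r + (u + 1) * m) = 0 := by
    intro m
    induction m with
    | zero =>
      intro _
      have h := coeff_succ_mul_of_derivative_eq hp (r - 1)
      rw [if_neg (by omega), if_neg (by omega), add_zero, Nat.sub_add_cancel hr] at h
      simpa using (mul_eq_zero.1 h).resolve_right (Nat.cast_add_one_ne_zero (r - 1))
    | succ m ih =>
      intro hm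
      rw [show r + (u + 1) * (m + 1) = r + (u + 1) * m + u + 1 by ring] at hm ⊢
      have h := coeff_succ_mul_of_derivative_eq hp (r + (u + 1) * m + u)
      rw [if_pos (by omega), if_neg (by omega), add_zero, Nat.add_sub_cancel,
        ih (by omega), mul_zero] at h
      exact (mul_eq_zero.1 h).resolve_right (Nat.cast_add_one_ne_zero _)
  have h := hclass (t / (u + 1)) (Nat.mod_add_div t (u + 1)).le
  rwa [hr_def, Nat.mod_add_div] at h

theorem exists_derivative_eq_C_mul_X_pow_mul_add_iff (hc₂ : c₂ ≠ 0) (hc : c ≠ 0) :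
    (∃ p : k[X], derivative p = C c₂ * X ^ u * p + C c * X ^ (t + u)) ↔ (u + 1) ∣ t := by
  refine ⟨fun ⟨p, hp⟩ => ?_,
    fun ⟨s, hs⟩ => hs ▸ exists_derivative_eq_C_mul_X_pow_mul_add hc₂ u s c⟩
  by_contra ht
  have hpt := coeff_eq_zero_of_derivative_eq hp ht
  rcases le_or_gt p.natDegree t with hle | hlt
  · have h := coeff_succ_mul_of_derivative_eq hp (t + u)
    rw [if_pos (by omega), if_pos rfl, Nat.add_sub_cancel, hpt,
      coeff_eq_zero_of_natDegree_lt (by omega)] at h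
    exact hc (by simpa using h.symm)
  · have h := coeff_succ_mul_of_derivative_eq hp (p.natDegree + u)
    rw [if_pos (by omega), if_neg (by omega), Nat.add_sub_cancel,
      coeff_eq_zero_of_natDegree_lt (by omega), coeff_natDegree] at h
    have hp0 : p ≠ 0 := by
      rintro rfl
      simp at hlt
    simp [hc₂, hp0] at h

end Polynomial

lemma Polynomial.Bivariate.equivMvPolynomial_C {k : Type*} [CommRing k] (p : k[X]) :
    equivMvPolynomial k (C p) = aeval (MvPolynomial.X 0) p := by
  simp [equivMvPolynomial, aeval_def, eval_map, MvPolynomial.algebraMap_eq]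

lemma Derivation.isShamsuddin_conj_equivMvPolynomial_symm {k : Type*} [CommRing k]
    {d : Derivation k (MvPolynomial (Fin 2) k) (MvPolynomial (Fin 2) k)} (a b : k[X])
    (hx : d (MvPolynomial.X 0) = 1)
    (hy : d (MvPolynomial.X 1) = equivMvPolynomial k (C a * Y + C b)) :
    (d.conj (equivMvPolynomial k).symm).IsShamsuddin a b where
  apply_C p := by
    rw [conj_apply, AlgEquiv.symm_symm, equivMvPolynomial_C, d.map_aeval, hx, smul_eq_mul,
      mul_one, AlgEquiv.symm_apply_eq, equivMvPolynomial_C]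
  apply_Y := by simp [hy]

end

open MvPolynomial

/-- A `k`-derivation `d` of `k[x,y]` is *simple* if the only `d`-differential ideals
(ideals `I` with `d(I) ⊆ I`) are `(0)` and the whole ring. Here `k[x,y]` is modelled as
`MvPolynomial (Fin 2) k`, with `x = X 0` and `y = X 1`. -/
def IsSimpleDerivation {k : Type*} [CommRing k]
    (d : Derivation k (MvPolynomial (Fin 2) k) (MvPolynomial (Fin 2) k)) : Prop :=
  ∀ I : Ideal (MvPolynomial (Fin 2) k), (∀ f ∈ I, d f ∈ I) → I = ⊥ ∨ I = ⊤

theorem simple_derivation_dx_xu_c1xt_c2y_iff_general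
    (k : Type*) [Field k] [CharZero k]
    (t u : ℕ)
    (c₁ c₂ : k) (hc₁ : c₁ ≠ 0) (hc₂ : c₂ ≠ 0) :
    IsSimpleDerivation
      (MvPolynomial.mkDerivation k
        ![1, X 0 ^ u * (C c₁ * X 0 ^ t + C c₂ * X 1)]) ↔
      ¬ (u + 1) ∣ t := by
  set d : Derivation k (MvPolynomial (Fin 2) k) (MvPolynomial (Fin 2) k) :=
    MvPolynomial.mkDerivation k ![1, X 0 ^ u * (C c₁ * X 0 ^ t + C c₂ * X 1)]
  have hD := d.isShamsuddin_conj_equivMvPolynomial_symm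
    (Polynomial.C c₂ * Polynomial.X ^ u) (Polynomial.C c₁ * Polynomial.X ^ (t + u))
    (by simp [d]) (by
      simp only [d, mkDerivation_X, Matrix.cons_val_one, Matrix.cons_val_fin_one, map_add,
        map_mul, map_pow, Polynomial.Bivariate.equivMvPolynomial_C_C,
        Polynomial.Bivariate.equivMvPolynomial_C_X, Polynomial.Bivariate.equivMvPolynomial_X]
      ring)
  exact (d.isSimple_conj_iff _).symm.trans <| hD.isSimple_iff_not_exists_derivative_eq.trans <|
    not_congr (Polynomial.exists_derivative_eq_C_mul_X_pow_mul_add_iff hc₂ hc₁)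

theorem simple_derivation_dx_xu_c1xt_c2y_iff
    (k : Type*) [Field k] [CharZero k]
    (t u : ℕ) (ht : 1 ≤ t)
    (c₁ c₂ : k) (hc₁ : c₁ ≠ 0) (hc₂ : c₂ ≠ 0) :
    IsSimpleDerivation
      (MvPolynomial.mkDerivation k
        ![1, X 0 ^ u * (C c₁ * X 0 ^ t + C c₂ * X 1)]) ↔
      ¬ (u + 1) ∣ t :=
  simple_derivation_dx_xu_c1xt_c2y_iff_general k t u c₁ c₂ hc₁ hc₂
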